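/- arXiv:0712.0231 — 3 statements merged into one kernel-verified Lean document; each statement's English description precedes it below -/
import Mathlib

section
/- Fix positive integers n, l and an integer s. For a strictly decreasing sequence k = (k_1 > k_2 > …) of integers with k_i = s − i + 1 for all sufficiently large i, write each k_i uniquely as k_i = a_i + n(b_i − 1) − n·l·m_i with a_i ∈ {1, …, n}, b_i ∈ {1, …, l}, m_i ∈ ℤ. For each b ∈ {1, …, l}, extract the subsequence of values a_i − n·m_i over indices i with b_i = b, in order. Then this subsequence k^{(b)} = (k^{(b)}_1, k^{(b)}_2, …) is strictly decreasing, and there exists a unique integer s_b such that k^{(b)}_i = s_b − i + 1 for all sufficiently large i; moreover s_1 + s_2 + ⋯ + s_l = s. -/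
/-!
Put `c(x) = a - n m` for `x = a + n (b - 1) - n l m`. Within one colour `b` the map `x ↦ c(x)` is
strictly increasing, and `x ≤ n l Q ↔ c(x) ≤ n Q` for every colour. Choose `Q` so small that from
some index `I` on the sequence `k` runs through all integers `≤ k I = n l Q`. Then the colour-`b`
subsequence runs through all integers `≤ n Q`, hence equals `n Q + J_b - j` from index `J_b` on,
where `J_b` counts the `i < I` of colour `b`. Summing, `∑ s_b = l n Q + I = s`.
-/

theorem StrictAnti.eq_add_sub_of_Iic_subset_range {d : ℕ → ℤ} (hd : StrictAnti d) {B : ℤ}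
    (hB : Set.Iic B ⊆ Set.range d) {j₀ : ℕ} (hj₀ : ∀ j, d j ≤ B ↔ j₀ ≤ j) :
    ∀ j ≥ j₀, d j = B + j₀ - j := by
  have hsucc : ∀ j ≥ j₀, d (j + 1) = d j - 1 := by
    intro j hj
    obtain ⟨j', hj'⟩ := hB (show d j - 1 ≤ B by linarith [(hj₀ j).2 hj])
    have hlt : j < j' := hd.lt_iff_gt.1 (by omega)
    have := hd.antitone (show j + 1 ≤ j' by omega)
    have := hd (Nat.lt_add_one j)
    omega
  intro j hj
  induction j, hj using Nat.le_induction with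
  | base =>
    obtain ⟨j', hj'⟩ := hB (le_refl B)
    have h₀ : j₀ ≤ j' := (hj₀ j').1 hj'.le
    have := hd.antitone h₀
    have := (hj₀ j₀).2 le_rfl
    omega
  | succ j hj ih => rw [hsucc j hj, ih]; push_cast; ring

theorem StrictMono.eq_nth {e : ℕ → ℕ} (he : StrictMono e) {p : ℕ → Prop}
    (hrange : Set.range e = {i | p i}) : e = Nat.nth p := by
  have hinf : {i | p i}.Infinite := hrange ▸ Set.infinite_range_of_injective he.injective
  funext j
  refine Nat.eq_nth_of_strictMonoOn_of_mapsTo_of_surjOn e ?_ ?_ ?_ (fun hf => absurd hf hinf)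
  · intro i hi
    obtain ⟨j, rfl⟩ : i ∈ Set.range e := hrange ▸ (hi : i ∈ {i | p i})
    exact ⟨j, fun hf => absurd hf hinf, rfl⟩
  · intro j _
    show p (e j)
    exact (hrange ▸ Set.mem_range_self j : e j ∈ {i | p i})
  · exact he.strictMonoOn _

theorem Nat.sum_count_fiberwise {α : Type*} [DecidableEq α] {f : ℕ → α} {t : Finset α}
    (hf : ∀ i, f i ∈ t) (I : ℕ) : ∑ x ∈ t, Nat.count (fun i => f i = x) I = I := by
  simp only [Nat.count_eq_card_filter_range]
  rw [← Finset.card_eq_sum_card_fiberwise (fun i _ => hf i), Finset.card_range]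

namespace Uglov

variable {n l : ℤ}

theorem decomp_unique {a b m a' b' m' : ℤ}
    (ha : 1 ≤ a ∧ a ≤ n) (hb : 1 ≤ b ∧ b ≤ l) (ha' : 1 ≤ a' ∧ a' ≤ n) (hb' : 1 ≤ b' ∧ b' ≤ l)
    (h : a + n * (b - 1) - n * l * m = a' + n * (b' - 1) - n * l * m') :
    a = a' ∧ b = b' ∧ m = m' := by
  obtain ⟨ha1, ha2⟩ := ha; obtain ⟨hb1, hb2⟩ := hb
  obtain ⟨ha1', ha2'⟩ := ha'; obtain ⟨hb1', hb2'⟩ := hb'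
  have hn : 0 < n := by omega
  have hl : 0 < l := by omega
  have hm : m = m' := by
    rcases lt_trichotomy m m' with hlt | heq | hgt
    · nlinarith [mul_le_mul_of_nonneg_left (show m + 1 ≤ m' by omega) (mul_pos hn hl).le]
    · exact heq
    · nlinarith [mul_le_mul_of_nonneg_left (show m' + 1 ≤ m by omega) (mul_pos hn hl).le]
  subst hm
  have hb : b = b' := by
    rcases lt_trichotomy b b' with hlt | heq | hgt
    · nlinarith [mul_le_mul_of_nonneg_left (show b + 1 ≤ b' by omega) hn.le]
    · exact heq
    · nlinarith [mul_le_mul_of_nonneg_left (show b' + 1 ≤ b by omega) hn.le]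
  subst hb
  exact ⟨by linarith, rfl, rfl⟩

theorem decomp_le_mul_iff {a b m Q : ℤ} (ha : 1 ≤ a ∧ a ≤ n) (hb : 1 ≤ b ∧ b ≤ l) :
    a + n * (b - 1) - n * l * m ≤ n * l * Q ↔ a - n * m ≤ n * Q := by
  obtain ⟨ha1, ha2⟩ := ha; obtain ⟨hb1, hb2⟩ := hb
  have hn : 0 < n := by omega
  have hl : 0 < l := by omega
  have hnl : n ≤ n * l := le_mul_of_one_le_right hn.le hl
  have hnb : n * (b - 1) ≤ n * (l - 1) := mul_le_mul_of_nonneg_left (by omega) hn.le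
  calc a + n * (b - 1) - n * l * m ≤ n * l * Q ↔ 0 < Q + m := by
        constructor
        · intro h; by_contra! h'
          nlinarith [mul_nonpos_of_nonneg_of_nonpos (mul_pos hn hl).le h']
        · intro h
          nlinarith [mul_le_mul_of_nonneg_left (show 1 ≤ Q + m by omega) (mul_pos hn hl).le]
    _ ↔ a - n * m ≤ n * Q := by
        constructor
        · intro h; nlinarith [mul_le_mul_of_nonneg_left (show 1 ≤ Q + m by omega) hn.le]
        · intro h; by_contra! h'
          nlinarith [mul_nonpos_of_nonneg_of_nonpos hn.le h']

theorem sub_mul_lt_of_decomp_lt (hl : 0 < l) {a b m a' m' : ℤ}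
    (ha : 1 ≤ a ∧ a ≤ n) (ha' : 1 ≤ a' ∧ a' ≤ n)
    (h : a' + n * (b - 1) - n * l * m' < a + n * (b - 1) - n * l * m) :
    a' - n * m' < a - n * m := by
  obtain ⟨ha1, ha2⟩ := ha; obtain ⟨ha1', ha2'⟩ := ha'
  have hn : 0 < n := by omega
  rcases le_or_gt m' m with hle | hgt
  · nlinarith [mul_le_mul_of_nonpos_right (le_mul_of_one_le_right hn.le hl)
      (show m' - m ≤ 0 by omega)]
  · nlinarith [mul_le_mul_of_nonneg_left (show m + 1 ≤ m' by omega) hn.le]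

theorem exists_sub_mul_eq (hn : 0 < n) (y : ℤ) : ∃ a m, (1 ≤ a ∧ a ≤ n) ∧ a - n * m = y :=
  ⟨(y - 1) % n + 1, -((y - 1) / n),
    ⟨by have := Int.emod_nonneg (y - 1) hn.ne'; omega,
     by have := Int.emod_lt_of_pos (y - 1) hn; omega⟩,
    by linarith [Int.emod_add_mul_ediv (y - 1) n]⟩

variable {k a b m : ℕ → ℤ}

theorem exists_colour_eq (hn : 0 < n) (ha : ∀ i, 1 ≤ a i ∧ a i ≤ n)
    (hb : ∀ i, 1 ≤ b i ∧ b i ≤ l) (hk : ∀ i, k i = a i + n * (b i - 1) - n * l * m i) {Q : ℤ}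
    (hsurj : ∀ x ≤ n * l * Q, ∃ i, k i = x) {b₀ : ℤ} (hb₀ : 1 ≤ b₀ ∧ b₀ ≤ l) {y : ℤ}
    (hy : y ≤ n * Q) : ∃ i, b i = b₀ ∧ a i - n * m i = y := by
  obtain ⟨a', m', ha', rfl⟩ := exists_sub_mul_eq hn y
  obtain ⟨i, hi⟩ := hsurj _ ((decomp_le_mul_iff ha' hb₀).2 hy)
  obtain ⟨rfl, hbi, rfl⟩ := decomp_unique (ha i) (hb i) ha' hb₀ (by rw [← hk, hi])
  exact ⟨i, hbi, rfl⟩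

theorem infinite_setOf_colour (hn : 0 < n) (ha : ∀ i, 1 ≤ a i ∧ a i ≤ n)
    (hb : ∀ i, 1 ≤ b i ∧ b i ≤ l) (hk : ∀ i, k i = a i + n * (b i - 1) - n * l * m i) {Q : ℤ}
    (hsurj : ∀ x ≤ n * l * Q, ∃ i, k i = x) {b₀ : ℤ} (hb₀ : 1 ≤ b₀ ∧ b₀ ≤ l) :
    {i | b i = b₀}.Infinite :=
  Set.Infinite.of_image (fun i => a i - n * m i) <| (Set.Iic_infinite (n * Q)).mono fun _ hy =>
    exists_colour_eq hn ha hb hk hsurj hb₀ hy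

theorem strictAnti_colour (hl : 0 < l) (ha : ∀ i, 1 ≤ a i ∧ a i ≤ n)
    (hk : ∀ i, k i = a i + n * (b i - 1) - n * l * m i) (hanti : StrictAnti k)
    {e : ℕ → ℕ} (he : StrictMono e) {b₀ : ℤ} (hrange : Set.range e ⊆ {i | b i = b₀}) :
    StrictAnti fun j => a (e j) - n * m (e j) := by
  have hcol : ∀ j, b (e j) = b₀ := Set.range_subset_iff.1 hrange
  intro j j' hjj'
  refine sub_mul_lt_of_decomp_lt hl (ha _) (ha _) (b := b₀) ?_
  simpa only [hk, hcol] using hanti (he hjj')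

theorem colour_eq_sub (hn : 0 < n) (hl : 0 < l) (ha : ∀ i, 1 ≤ a i ∧ a i ≤ n)
    (hb : ∀ i, 1 ≤ b i ∧ b i ≤ l) (hk : ∀ i, k i = a i + n * (b i - 1) - n * l * m i)
    (hanti : StrictAnti k) {I : ℕ} {Q : ℤ} (hkI : k I = n * l * Q)
    (hsurj : ∀ x ≤ n * l * Q, ∃ i, k i = x) {b₀ : ℤ} (hb₀ : 1 ≤ b₀ ∧ b₀ ≤ l)
    {e : ℕ → ℕ} (he : StrictMono e) (hrange : Set.range e = {i | b i = b₀}) :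
    ∀ j ≥ Nat.count (fun i => b i = b₀) I,
      a (e j) - n * m (e j) = n * Q + Nat.count (fun i => b i = b₀) I - j := by
  have hinf := infinite_setOf_colour hn ha hb hk hsurj hb₀
  refine (strictAnti_colour hl ha hk hanti he hrange.le).eq_add_sub_of_Iic_subset_range
    (fun y hy => ?_) (fun j => ?_)
  · obtain ⟨i, hbi, rfl⟩ := exists_colour_eq hn ha hb hk hsurj hb₀ hy
    obtain ⟨j, rfl⟩ : i ∈ Set.range e := hrange ▸ hbi
    exact ⟨j, rfl⟩
  · -- `c (k (e j)) ≤ n Q ↔ k (e j) ≤ k I ↔ I ≤ e j ↔ count I ≤ j`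
    rw [← decomp_le_mul_iff (ha _) (hb _), ← hk, ← hkI, hanti.le_iff_ge,
      he.eq_nth hrange, ← not_lt, ← Nat.lt_nth_iff_count_lt hinf, not_lt]

end Uglov

/-- Uglov's decomposition of an ordered semi-infinite sequence of charge `s`
into `l` strictly decreasing subsequences with charges `s_1, …, s_l` summing to `s`.
Sequences are 0-indexed: `k i = s - i` eventually corresponds to `k_i = s - i + 1`
(1-indexed) in the paper. -/
theorem stmt1 (n l : ℕ) (hn : 0 < n) (hl : 0 < l) (s : ℤ)
    (k a b m : ℕ → ℤ)
    (ha : ∀ i, 1 ≤ a i ∧ a i ≤ (n : ℤ)) (hb : ∀ i, 1 ≤ b i ∧ b i ≤ (l : ℤ))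
    (hk : ∀ i, k i = a i + n * (b i - 1) - n * l * m i)
    (hdec : ∀ i, k (i + 1) < k i)
    (hev : ∃ N, ∀ i ≥ N, k i = s - i) :
    (∀ b0 ∈ Finset.Icc (1 : ℤ) (l : ℤ),
      ∃ e : ℕ → ℕ, StrictMono e ∧ Set.range e = {i | b i = b0}) ∧
    (∀ b0 ∈ Finset.Icc (1 : ℤ) (l : ℤ), ∀ e : ℕ → ℕ, StrictMono e →
      Set.range e = {i | b i = b0} →
      (∀ j, a (e (j + 1)) - n * m (e (j + 1)) < a (e j) - n * m (e j)) ∧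
      ∃! t : ℤ, ∃ N, ∀ j ≥ N, a (e j) - n * m (e j) = t - j) ∧
    ∃ sb : ℤ → ℤ, (∑ b0 ∈ Finset.Icc (1 : ℤ) (l : ℤ), sb b0) = s ∧
      ∀ b0 ∈ Finset.Icc (1 : ℤ) (l : ℤ), ∀ e : ℕ → ℕ, StrictMono e →
        Set.range e = {i | b i = b0} →
        ∃ N, ∀ j ≥ N, a (e j) - n * m (e j) = sb b0 - j := by
  obtain ⟨N, hN⟩ := hev
  have hn' : (0 : ℤ) < n := by exact_mod_cast hn
  have hl' : (0 : ℤ) < l := by exact_mod_cast hl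
  have hanti : StrictAnti k := strictAnti_nat_of_succ_lt hdec
  obtain ⟨Q, hQ⟩ : ∃ Q : ℤ, n * l * Q ≤ s - N :=
    ⟨-|s - N|, by nlinarith [abs_nonneg (s - N), neg_abs_le (s - N), mul_pos hn' hl']⟩
  set I := (s - n * l * Q).toNat
  have hI : (I : ℤ) = s - n * l * Q := by omega
  have hkI : k I = n * l * Q := by rw [hN I (by omega)]; omega
  have hsurj : ∀ x ≤ (n : ℤ) * l * Q, ∃ i, k i = x := fun x hx =>
    ⟨(s - x).toNat, by rw [hN _ (by omega)]; omega⟩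
  have hcharge : ∀ b0 ∈ Finset.Icc (1 : ℤ) l, ∀ e : ℕ → ℕ, StrictMono e →
      Set.range e = {i | b i = b0} → ∀ j ≥ Nat.count (fun i => b i = b0) I,
        a (e j) - n * m (e j) = n * Q + Nat.count (fun i => b i = b0) I - j :=
    fun b0 hb0 _ he hrange =>
      Uglov.colour_eq_sub hn' hl' ha hb hk hanti hkI hsurj (Finset.mem_Icc.1 hb0) he hrange
  refine ⟨fun b0 hb0 => ?_, fun b0 hb0 e he hrange => ⟨fun j => ?_, ?_⟩,
    fun b0 => n * Q + Nat.count (fun i => b i = b0) I, ?_, fun b0 hb0 e he hrange => ?_⟩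
  · have hinf := Uglov.infinite_setOf_colour hn' ha hb hk hsurj (Finset.mem_Icc.1 hb0)
    exact ⟨_, Nat.nth_strictMono hinf, Nat.range_nth_of_infinite hinf⟩
  · exact Uglov.strictAnti_colour hl' ha hk hanti he hrange.le (Nat.lt_add_one j)
  · refine ⟨_, ⟨_, hcharge b0 hb0 e he hrange⟩, fun t ⟨N', hN'⟩ => ?_⟩
    have h₁ := hN' _ (le_max_left N' (Nat.count (fun i => b i = b0) I))
    have h₂ := hcharge b0 hb0 e he hrange _ (le_max_right N' _)
    omega
  · rw [Finset.sum_add_distrib, Finset.sum_const, Int.card_Icc, ← Nat.cast_sum,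
      Nat.sum_count_fiberwise (fun i => Finset.mem_Icc.2 (hb i))]
    simp only [add_sub_cancel_right, Int.toNat_natCast, nsmul_eq_mul]
    linear_combination hI
  · exact ⟨_, hcharge b0 hb0 e he hrange⟩
end

section
/- Let n, l be positive integers, M an integer with M > 2n, and let λ = (λ^{(1)}, …, λ^{(l)}) be an l-partition with multi-charge s = (s_1, …, s_l) satisfying s_i − s_{i+1} > M + |λ| for i = 1, …, l−1 (M-dominance). Fix b_1 < b_2 in {1, …, l}. Set p = ℓ(λ^{(b_1)}) + 1, where ℓ denotes the number of nonzero parts. Write k^{(b)}_i = s_b − i + 1 + λ^{(b)}_i = a^{(b)}_i − n·m^{(b)}_i with a^{(b)}_i ∈ {1,…,n}, m^{(b)}_i ∈ ℤ. Then a^{(b_1)}_p + n(b_1 − 1) − n·l·m^{(b_1)}_p > a^{(b_2)}_1 + n(b_2 − 1) − n·l·m^{(b_2)}_1. -/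
/-- Total size of an `l`-partition with components indexed by `b ∈ {1,…,l}`,
parts `1`-indexed, represented as `ℤ`-valued functions. -/
noncomputable def mpSize (l : ℕ) (lam : ℕ → ℕ → ℤ) : ℤ :=
  ∑ b ∈ Finset.Icc 1 l, ∑ᶠ i, lam b i

/-!
Both beta-numbers are written as `a - n m` and compared through `a + n (b - 1) - n l m`, which
equals `l k + (1 - l) a + n (b - 1)`. Since `a ∈ [1, n]` and `1 ≤ b₁ < b₂ ≤ l`, the inequality
follows as soon as `k^{(b₁)}_p - k^{(b₂)}_1 ≥ 2n - 1`. Dominance makes `s_{b₁} - s_{b₂}` exceed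
`M + |λ|`, while `k^{(b₁)}_p - k^{(b₂)}_1 = s_{b₁} - s_{b₂} - (p - 1) - λ^{(b₂)}_1`, and
`(p - 1) + λ^{(b₂)}_1 ≤ |λ|` because `λ^{(b₁)}` has `p - 1` nonzero parts.
-/

theorem Function.HasFiniteSupport.of_forall_ge {M : Type*} [Zero M] {f : ℕ → M} {N : ℕ}
    (h : ∀ i ≥ N, f i = 0) : Function.HasFiniteSupport f :=
  (Set.finite_Iio N).subset fun i hi => not_le.1 fun hNi => hi (h i hNi)

theorem Finset.sum_le_finsum {α M : Type*} [AddCommMonoid M] [PartialOrder M]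
    [IsOrderedAddMonoid M] (t : Finset α) {f : α → M} (hf : Function.HasFiniteSupport f)
    (h : ∀ j, 0 ≤ f j) : ∑ j ∈ t, f j ≤ ∑ᶠ j, f j := by
  classical
  calc ∑ j ∈ t, f j ≤ ∑ j ∈ t ∪ hf.toFinset, f j :=
        Finset.sum_le_sum_of_subset_of_nonneg Finset.subset_union_left fun j _ _ => h j
    _ = ∑ᶠ j, f j :=
        (finsum_eq_sum_of_support_toFinset_subset _ hf Finset.subset_union_right).symm

theorem sub_one_le_finsum_of_pos {f : ℕ → ℤ} (hf : Function.HasFiniteSupport f)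
    (hnn : ∀ i, 0 ≤ f i) {p : ℕ} (hpos : ∀ i, 1 ≤ i → i < p → 0 < f i) :
    (p : ℤ) - 1 ≤ ∑ᶠ i, f i :=
  calc (p : ℤ) - 1 ≤ ∑ _i ∈ Finset.Ico 1 p, (1 : ℤ) := by
        simp only [Finset.sum_const, Nat.card_Ico, Int.nsmul_eq_mul, mul_one]; omega
    _ ≤ ∑ i ∈ Finset.Ico 1 p, f i := Finset.sum_le_sum fun i hi => by
        rw [Finset.mem_Ico] at hi
        exact hpos i hi.1 hi.2
    _ ≤ ∑ᶠ i, f i := Finset.sum_le_finsum _ hf hnn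

section mpSize

variable {l : ℕ} {lam : ℕ → ℕ → ℤ}

theorem mpSize_nonneg (hnn : ∀ b, 1 ≤ b → b ≤ l → ∀ i, 0 ≤ lam b i) : 0 ≤ mpSize l lam :=
  Finset.sum_nonneg fun b hb => finsum_nonneg (hnn b (Finset.mem_Icc.1 hb).1 (Finset.mem_Icc.1 hb).2)

theorem finsum_add_finsum_le_mpSize (hnn : ∀ b, 1 ≤ b → b ≤ l → ∀ i, 0 ≤ lam b i)
    {b₁ b₂ : ℕ} (hb₁ : b₁ ∈ Finset.Icc 1 l) (hb₂ : b₂ ∈ Finset.Icc 1 l) (hne : b₁ ≠ b₂) :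
    ∑ᶠ i, lam b₁ i + ∑ᶠ i, lam b₂ i ≤ mpSize l lam := by
  rw [← Finset.sum_pair (f := fun b => ∑ᶠ i, lam b i) hne]
  refine Finset.sum_le_sum_of_subset_of_nonneg ?_ fun b hb _ => ?_
  · exact Finset.insert_subset hb₁ (Finset.singleton_subset_iff.2 hb₂)
  · exact finsum_nonneg (hnn b (Finset.mem_Icc.1 hb).1 (Finset.mem_Icc.1 hb).2)

end mpSize

theorem sub_gt_of_forall_sub_succ_gt {s : ℕ → ℤ} {c : ℤ} {l : ℕ} (hc : 0 ≤ c)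
    (h : ∀ b, 1 ≤ b → b < l → s b - s (b + 1) > c) {b₁ b₂ : ℕ} (hb₁ : 1 ≤ b₁)
    (hb₁₂ : b₁ < b₂) (hb₂ : b₂ ≤ l) : s b₁ - s b₂ > c := by
  induction b₂, hb₁₂ using Nat.le_induction with
  | base => exact h b₁ hb₁ hb₂
  | succ b hb ih =>
    have := ih (by omega)
    have := h b (by omega) hb₂
    linarith

theorem shifted_index_lt_of_two_mul_sub_one_le {n l b₁ b₂ : ℕ} {a₁ a₂ m₁ m₂ k₁ k₂ : ℤ}
    (ha₁ : 1 ≤ a₁ ∧ a₁ ≤ n) (ha₂ : 1 ≤ a₂ ∧ a₂ ≤ n) (hb₁ : 1 ≤ b₁) (hb₁₂ : b₁ < b₂)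
    (hb₂ : b₂ ≤ l) (hk₁ : k₁ = a₁ - n * m₁) (hk₂ : k₂ = a₂ - n * m₂)
    (hgap : 2 * (n : ℤ) - 1 ≤ k₁ - k₂) :
    a₂ + n * ((b₂ : ℤ) - 1) - n * l * m₂ < a₁ + n * ((b₁ : ℤ) - 1) - n * l * m₁ := by
  have hl : (1 : ℤ) ≤ l := by omega
  have hb : (b₂ : ℤ) - b₁ ≤ l - 1 := by omega
  have hm₁ : n * l * m₁ = l * (a₁ - k₁) := by rw [hk₁]; ring
  have hm₂ : n * l * m₂ = l * (a₂ - k₂) := by rw [hk₂]; ring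
  rw [hm₁, hm₂]
  nlinarith [mul_le_mul_of_nonneg_left hgap (by omega : (0 : ℤ) ≤ l),
    mul_le_mul_of_nonneg_left (by omega : a₁ - a₂ ≤ n - 1) (by omega : (0 : ℤ) ≤ l - 1),
    mul_le_mul_of_nonneg_left hb (by omega : (0 : ℤ) ≤ n)]

theorem stmt5_general (n l : ℕ) (M : ℤ) (hM : M > 2 * n)
    (s : ℕ → ℤ) (lam : ℕ → ℕ → ℤ)
    (hpart : ∀ b, 1 ≤ b → b ≤ l → (∀ i, 1 ≤ i → lam b (i + 1) ≤ lam b i) ∧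
      (∀ i, 0 ≤ lam b i) ∧ (∃ N, ∀ i ≥ N, lam b i = 0))
    (hdom : ∀ b, 1 ≤ b → b < l → s b - s (b + 1) > M + mpSize l lam)
    (b1 b2 : ℕ) (hb1 : 1 ≤ b1) (hb12 : b1 < b2) (hb2 : b2 ≤ l)
    (p : ℕ) (hp0 : lam b1 p = 0)
    (hp1 : ∀ i, 1 ≤ i → i < p → 0 < lam b1 i)
    (a1 m1 a2 m2 : ℤ)
    (ha1 : 1 ≤ a1 ∧ a1 ≤ (n : ℤ)) (ha2 : 1 ≤ a2 ∧ a2 ≤ (n : ℤ))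
    (hk1 : s b1 - p + 1 + lam b1 p = a1 - n * m1)
    (hk2 : s b2 - 1 + 1 + lam b2 1 = a2 - n * m2) :
    a1 + n * ((b1 : ℤ) - 1) - n * l * m1 > a2 + n * ((b2 : ℤ) - 1) - n * l * m2 := by
  have hnn : ∀ b, 1 ≤ b → b ≤ l → ∀ i, 0 ≤ lam b i := fun b h₁ h₂ => (hpart b h₁ h₂).2.1
  have hfin : ∀ b, 1 ≤ b → b ≤ l → Function.HasFiniteSupport (lam b) := fun b h₁ h₂ =>
    have ⟨_, hN⟩ := (hpart b h₁ h₂).2.2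
    .of_forall_ge hN
  have hsize : (p : ℤ) - 1 + lam b2 1 ≤ mpSize l lam := calc
    (p : ℤ) - 1 + lam b2 1 ≤ ∑ᶠ i, lam b1 i + ∑ᶠ i, lam b2 i := add_le_add
      (sub_one_le_finsum_of_pos (hfin b1 hb1 (by omega)) (hnn b1 hb1 (by omega)) hp1)
      (single_le_finsum 1 (hfin b2 (by omega) hb2) (hnn b2 (by omega) hb2))
    _ ≤ mpSize l lam := finsum_add_finsum_le_mpSize hnn (Finset.mem_Icc.2 ⟨hb1, by omega⟩)
      (Finset.mem_Icc.2 ⟨by omega, hb2⟩) hb12.ne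
  have hcharge : s b1 - s b2 > M + mpSize l lam :=
    sub_gt_of_forall_sub_succ_gt (by linarith [mpSize_nonneg hnn]) hdom hb1 hb12 hb2
  exact shifted_index_lt_of_two_mul_sub_one_le ha1 ha2 hb1 hb12 hb2 hk1 hk2
    (by rw [hp0]; linarith)

/-- inequality (3.8.1) of the paper. -/
theorem stmt5 (n l : ℕ) (hn : 0 < n) (hl : 0 < l) (M : ℤ) (hM : M > 2 * n)
    (s : ℕ → ℤ) (lam : ℕ → ℕ → ℤ)
    (hpart : ∀ b, 1 ≤ b → b ≤ l → (∀ i, 1 ≤ i → lam b (i + 1) ≤ lam b i) ∧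
      (∀ i, 0 ≤ lam b i) ∧ (∃ N, ∀ i ≥ N, lam b i = 0))
    (hdom : ∀ b, 1 ≤ b → b < l → s b - s (b + 1) > M + mpSize l lam)
    (b1 b2 : ℕ) (hb1 : 1 ≤ b1) (hb12 : b1 < b2) (hb2 : b2 ≤ l)
    (p : ℕ) (hp : 1 ≤ p) (hp0 : lam b1 p = 0)
    (hp1 : ∀ i, 1 ≤ i → i < p → 0 < lam b1 i)
    (a1 m1 a2 m2 : ℤ)
    (ha1 : 1 ≤ a1 ∧ a1 ≤ (n : ℤ)) (ha2 : 1 ≤ a2 ∧ a2 ≤ (n : ℤ))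
    (hk1 : s b1 - p + 1 + lam b1 p = a1 - n * m1)
    (hk2 : s b2 - 1 + 1 + lam b2 1 = a2 - n * m2) :
    a1 + n * ((b1 : ℤ) - 1) - n * l * m1 > a2 + n * ((b2 : ℤ) - 1) - n * l * m2 :=
  stmt5_general n l M hM s lam hpart hdom b1 b2 hb1 hb12 hb2 p hp0 hp1 a1 m1 a2 m2 ha1 ha2 hk1 hk2
end

section
/- Under the hypotheses of Lemma 3.8 (|λ, s⟩ is M-dominant with M > 2n, and b_1 < b_2 fixed), for any index i let σ(i) be the smallest j such that the wedge-factor u^{(b_2)}_{k_i^{(b_2)}} is larger than u^{(b_1)}_{k_j^{(b_1)}} in the total order of (3.5.1). Then λ^{(b_1)}_{σ(i)} = 0 and k^{(b_1)}_{σ(i)} = n − n·m^{(b_2)}_i, where k^{(b_2)}_i = a^{(b_2)}_i − n·m^{(b_2)}_i with a^{(b_2)}_i ∈ {1,…,n}. -/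
def IsIntPartition (f : ℕ → ℤ) : Prop :=
  (∀ i, 1 ≤ i → f (i + 1) ≤ f i) ∧ (∀ i, 0 ≤ f i) ∧ ∃ N, ∀ i ≥ N, f i = 0

namespace IsIntPartition

variable {f : ℕ → ℤ}

theorem nonneg (hf : IsIntPartition f) (i : ℕ) : 0 ≤ f i := hf.2.1 i

theorem antitoneOn (hf : IsIntPartition f) : AntitoneOn f {i | 1 ≤ i} :=
  antitoneOn_nat_Ici_of_succ_le hf.1

theorem exists_support_subset_range (hf : IsIntPartition f) :
    ∃ N, Function.support f ⊆ Finset.range N := by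
  obtain ⟨N, hN⟩ := hf.2.2
  refine ⟨N, fun i hi => ?_⟩
  simp only [Finset.coe_range, Set.mem_Iio]
  by_contra! h
  exact hi (hN i h)

theorem hasFiniteSupport (hf : IsIntPartition f) : Function.HasFiniteSupport f := by
  obtain ⟨N, hN⟩ := hf.exists_support_subset_range
  exact (Finset.range N).finite_toSet.subset hN

theorem le_finsum (hf : IsIntPartition f) (i : ℕ) : f i ≤ ∑ᶠ j, f j :=
  single_le_finsum i hf.hasFiniteSupport hf.nonneg

theorem finsum_nonneg (hf : IsIntPartition f) : 0 ≤ ∑ᶠ j, f j :=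
  _root_.finsum_nonneg hf.nonneg

/-- The parts `f 1 ≥ ⋯ ≥ f j` are all at least `1`. -/
theorem index_le_finsum (hf : IsIntPartition f) {j : ℕ} (hj : 1 ≤ j) (hfj : 1 ≤ f j) :
    (j : ℤ) ≤ ∑ᶠ i, f i := by
  obtain ⟨N, hN⟩ := hf.exists_support_subset_range
  have hjN : j < N := by simpa using hN (show f j ≠ 0 by omega)
  rw [finsum_eq_sum_of_support_subset f hN]
  calc (j : ℤ) = ∑ _i ∈ Finset.Icc 1 j, (1 : ℤ) := by simp
    _ ≤ ∑ i ∈ Finset.Icc 1 j, f i := Finset.sum_le_sum fun i hi => by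
        rw [Finset.mem_Icc] at hi
        exact hfj.trans (hf.antitoneOn hi.1 hj hi.2)
    _ ≤ ∑ i ∈ Finset.range N, f i :=
        Finset.sum_le_sum_of_subset_of_nonneg
          (fun i hi => by simp only [Finset.mem_Icc, Finset.mem_range] at hi ⊢; omega)
          (fun i _ _ => hf.nonneg i)

theorem eq_zero_of_finsum_lt (hf : IsIntPartition f) {j : ℕ} (hj : 1 ≤ j)
    (hlt : ∑ᶠ i, f i < j) : f j = 0 := by
  by_contra h
  have := hf.index_le_finsum hj (by have := hf.nonneg j; omega)
  omega

end IsIntPartition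

theorem finsum_add_finsum_le_mpSize_s6 {l : ℕ} {lam : ℕ → ℕ → ℤ}
    (hlam : ∀ b, 1 ≤ b → b ≤ l → IsIntPartition (lam b)) {b b' : ℕ} (hb : 1 ≤ b)
    (hbb' : b < b') (hb' : b' ≤ l) :
    ∑ᶠ i, lam b i + ∑ᶠ i, lam b' i ≤ mpSize l lam := by
  rw [mpSize, ← Finset.sum_pair (f := fun c => ∑ᶠ i, lam c i) hbb'.ne]
  refine Finset.sum_le_sum_of_subset_of_nonneg (fun c hc => ?_) (fun c hc _ => ?_)
  · simp only [Finset.mem_insert, Finset.mem_singleton, Finset.mem_Icc] at hc ⊢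
    omega
  · rw [Finset.mem_Icc] at hc
    exact (hlam c hc.1 hc.2).finsum_nonneg

theorem lt_sub_of_forall_lt_sub_succ {l : ℕ} {s : ℕ → ℤ} {c : ℤ} (hc : 0 ≤ c)
    (hs : ∀ b, 1 ≤ b → b < l → c < s b - s (b + 1)) {b b' : ℕ} (hb : 1 ≤ b)
    (hbb' : b < b') (hb' : b' ≤ l) : c < s b - s b' := by
  induction b', hbb' using Nat.le_induction with
  | base => exact hs b hb hb'
  | succ b' hbb' ih =>
    have := hs b' (by omega) hb'
    have := ih (by omega)
    linarith

/-- The integer `a + n(b - 1) - n l m` indexing the wedge factor `u^{(b)}_{a - n m}`, as in (3.1.1). -/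
def wedgeIndex (n l : ℕ) (a : ℤ) (b : ℕ) (m : ℤ) : ℤ :=
  a + n * ((b : ℤ) - 1) - n * l * m

section wedgeIndex

variable {n l : ℕ} {a a' m m' : ℤ} {b b' : ℕ}

theorem le_of_wedgeIndex_lt (ha : 1 ≤ a) (ha' : a' ≤ n) (hb : 1 ≤ b) (hb' : b' ≤ l)
    (h : wedgeIndex n l a b m < wedgeIndex n l a' b' m') : m' ≤ m := by
  unfold wedgeIndex at h
  by_contra! hm
  have hm' : (n * l : ℤ) * (m + 1) ≤ n * l * m' :=
    mul_le_mul_of_nonneg_left (by omega) (by positivity)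
  have hbb' : (n : ℤ) * (b' - b) ≤ n * (l - 1) :=
    mul_le_mul_of_nonneg_left (by omega) (by positivity)
  linarith

theorem wedgeIndex_lt_of_le (ha : a ≤ n) (ha' : 1 ≤ a') (hbb' : b < b') (hm : m' ≤ m) :
    wedgeIndex n l a b m < wedgeIndex n l a' b' m' := by
  unfold wedgeIndex
  have hm' : (n * l : ℤ) * m' ≤ n * l * m := mul_le_mul_of_nonneg_left hm (by positivity)
  have hb : (n : ℤ) * (b + 1) ≤ n * b' := mul_le_mul_of_nonneg_left (by omega) (by positivity)
  linarith

end wedgeIndex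

/-- In `k = a - n m` with `a ∈ {1,…,n}`, going from `k` to `k + 1` changes `m` only when `a = n`. -/
theorem eq_and_eq_succ_of_sub_mul_eq_succ {n : ℕ} {a a' m m' : ℤ} (hn : 0 < n) (ha : a ≤ n)
    (ha' : 1 ≤ a') (hm : m' < m) (h : a' - n * m' = a - n * m + 1) :
    a = n ∧ m = m' + 1 := by
  have hle : (n : ℤ) * (m - m') ≤ n * 1 := by linarith
  have hm1 : m - m' ≤ 1 := le_of_mul_le_mul_left hle (by exact_mod_cast hn)
  have hm2 : m = m' + 1 := by omega
  subst hm2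
  constructor <;> linarith

theorem stmt6_general (n l : ℕ) (hn : 0 < n) (M : ℤ) (hM : M > 2 * n)
    (s : ℕ → ℤ) (lam : ℕ → ℕ → ℤ)
    (hpart : ∀ b, 1 ≤ b → b ≤ l → (∀ i, 1 ≤ i → lam b (i + 1) ≤ lam b i) ∧
      (∀ i, 0 ≤ lam b i) ∧ (∃ N, ∀ i ≥ N, lam b i = 0))
    (hdom : ∀ b, 1 ≤ b → b < l → s b - s (b + 1) > M + mpSize l lam)
    (b1 b2 : ℕ) (hb1 : 1 ≤ b1) (hb12 : b1 < b2) (hb2 : b2 ≤ l)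
    (A Mm : ℕ → ℕ → ℤ)
    (hA : ∀ b i, 1 ≤ A b i ∧ A b i ≤ (n : ℤ) ∧
      s b - i + 1 + lam b i = A b i - n * Mm b i)
    (i : ℕ)
    (sg : ℕ)
    (hsg : A b2 i + n * ((b2 : ℤ) - 1) - n * l * Mm b2 i >
           A b1 sg + n * ((b1 : ℤ) - 1) - n * l * Mm b1 sg)
    (hsgmin : ∀ j, 1 ≤ j → j < sg →
      ¬(A b2 i + n * ((b2 : ℤ) - 1) - n * l * Mm b2 i >
        A b1 j + n * ((b1 : ℤ) - 1) - n * l * Mm b1 j)) :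
    lam b1 sg = 0 ∧ s b1 - sg + 1 + lam b1 sg = n - n * Mm b2 i := by
  have hpart' : ∀ b, 1 ≤ b → b ≤ l → IsIntPartition (lam b) := hpart
  have hlam1 := hpart' b1 hb1 (by omega)
  have hlam2 := hpart' b2 (by omega) hb2
  have hsize := finsum_add_finsum_le_mpSize_s6 hpart' hb1 hb12 hb2
  have hgap : M + mpSize l lam < s b1 - s b2 :=
    lt_sub_of_forall_lt_sub_succ (by linarith [hlam1.finsum_nonneg, hlam2.finsum_nonneg])
      hdom hb1 hb12 hb2
  obtain ⟨hA1lo, hA1hi, hk1⟩ := hA b1 sg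
  obtain ⟨hA2lo, hA2hi, hk2⟩ := hA b2 i
  have hMm : Mm b2 i ≤ Mm b1 sg := le_of_wedgeIndex_lt hA1lo hA2hi hb1 hb2 hsg
  have hk_le : s b1 - sg + 1 + lam b1 sg ≤ n - n * Mm b2 i := by
    have := mul_le_mul_of_nonneg_left hMm (show (0 : ℤ) ≤ n by positivity)
    linarith
  have hsg_large : ∑ᶠ j, lam b1 j + 1 < sg := by
    by_contra!
    linarith [hlam1.nonneg sg, hlam2.le_finsum i, Int.natCast_nonneg i, Int.natCast_nonneg n]
  obtain ⟨p, rfl⟩ : ∃ p, sg = p + 1 := ⟨sg - 1, by have := hlam1.finsum_nonneg; omega⟩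
  have hp : 1 ≤ p := by have := hlam1.finsum_nonneg; omega
  push_cast at hsg_large hk1
  have hlam_p : lam b1 p = 0 := hlam1.eq_zero_of_finsum_lt hp (by linarith)
  have hlam_sg : lam b1 (p + 1) = 0 :=
    hlam1.eq_zero_of_finsum_lt (by omega) (by push_cast; linarith)
  obtain ⟨hA1'lo, hA1'hi, hk1'⟩ := hA b1 p
  have hMm' : Mm b1 p < Mm b2 i := by
    by_contra! h
    exact hsgmin p hp (by omega) (wedgeIndex_lt_of_le hA1'hi hA2lo hb12 h)
  obtain ⟨hAn, hMm_succ⟩ := eq_and_eq_succ_of_sub_mul_eq_succ hn hA1hi hA1'lo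
    (hMm'.trans_le hMm) (by linarith)
  refine ⟨hlam_sg, ?_⟩
  push_cast
  rw [hk1, hAn, show Mm b1 (p + 1) = Mm b2 i by omega]

/-- Lemma 3.8 of the paper: under `M`-dominance with `M > 2n` and
`b_1 < b_2`, if `σ` is the smallest `j ≥ 1` such that the wedge factor
`u^{(b_2)}_{k_i^{(b_2)}}` is larger than `u^{(b_1)}_{k_j^{(b_1)}}` (comparison of
the integers `a + n(b-1) - n·l·m` as in (3.5.1)), then `λ^{(b_1)}_σ = 0` and
`k^{(b_1)}_σ = n - n·m^{(b_2)}_i`.  Here `k^{(b)}_j = s_b - j + 1 + λ^{(b)}_j`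
and `k^{(b)}_j = A b j - n·(Mm b j)` with `A b j ∈ {1,…,n}`. -/
theorem stmt6 (n l : ℕ) (hn : 0 < n) (hl : 0 < l) (M : ℤ) (hM : M > 2 * n)
    (s : ℕ → ℤ) (lam : ℕ → ℕ → ℤ)
    (hpart : ∀ b, 1 ≤ b → b ≤ l → (∀ i, 1 ≤ i → lam b (i + 1) ≤ lam b i) ∧
      (∀ i, 0 ≤ lam b i) ∧ (∃ N, ∀ i ≥ N, lam b i = 0))
    (hdom : ∀ b, 1 ≤ b → b < l → s b - s (b + 1) > M + mpSize l lam)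
    (b1 b2 : ℕ) (hb1 : 1 ≤ b1) (hb12 : b1 < b2) (hb2 : b2 ≤ l)
    (A Mm : ℕ → ℕ → ℤ)
    (hA : ∀ b i, 1 ≤ A b i ∧ A b i ≤ (n : ℤ) ∧
      s b - i + 1 + lam b i = A b i - n * Mm b i)
    (i : ℕ) (hi : 1 ≤ i)
    (sg : ℕ) (hsg1 : 1 ≤ sg)
    (hsg : A b2 i + n * ((b2 : ℤ) - 1) - n * l * Mm b2 i >
           A b1 sg + n * ((b1 : ℤ) - 1) - n * l * Mm b1 sg)
    (hsgmin : ∀ j, 1 ≤ j → j < sg →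
      ¬(A b2 i + n * ((b2 : ℤ) - 1) - n * l * Mm b2 i >
        A b1 j + n * ((b1 : ℤ) - 1) - n * l * Mm b1 j)) :
    lam b1 sg = 0 ∧ s b1 - sg + 1 + lam b1 sg = n - n * Mm b2 i :=
  stmt6_general n l hn M hM s lam hpart hdom b1 b2 hb1 hb12 hb2 A Mm hA i sg hsg hsgmin
end
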